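/- With U, C, ξ, φ as in Proposition 1 (C a left U-module algebra, φ : U → C linear with φ(1)=1 and φ(xy) = (ξ_{x₍₁₎}·φ(y))·φ(x₍₂₎)), the modified action x · f := (ξ_{x₍₁₎}·f)·φ(x₍₂₎) satisfies the generalized Leibniz rule x·(fg) = (ξ_{x₍₁₎}·f)·(x₍₂₎·g) for all x ∈ U and f, g ∈ C. -/
import Mathlib


open TensorProduct

/-- The "Sweedler" map `x ↦ A(x₍₁₎) * B(x₍₂₎)`. -/
noncomputable def sw {R U C : Type*} [CommRing R] [Ring U] [Bialgebra R U]
    [Ring C] [Algebra R C] (A B : U →ₗ[R] C) : U →ₗ[R] C :=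
  LinearMap.mul' R C ∘ₗ TensorProduct.map A B ∘ₗ Coalgebra.comul

/-- `actOn ξ f : x ↦ ξ_x · f`. -/
noncomputable def actOn {R U C : Type*} [CommRing R] [Ring U] [Algebra R U]
    [Ring C] [Algebra R C] (ξ : U →ₗ[R] Module.End R C) (f : C) : U →ₗ[R] C :=
  LinearMap.applyₗ f ∘ₗ ξ

lemma sw_assoc {R U C : Type*} [CommRing R] [Ring U] [Bialgebra R U]
    [Ring C] [Algebra R C] (A B D : U →ₗ[R] C) :
    sw (sw A B) D = sw A (sw B D) := by
  ext x
  unfold sw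
  simp only [LinearMap.comp_apply]
  have h1 : TensorProduct.map ((LinearMap.mul' R C ∘ₗ TensorProduct.map A B) ∘ₗ
      Coalgebra.comul) D = TensorProduct.map (LinearMap.mul' R C ∘ₗ TensorProduct.map A B) D ∘ₗ
      LinearMap.rTensor U Coalgebra.comul := by
    rw [LinearMap.rTensor, ← TensorProduct.map_comp, LinearMap.comp_id]
  have h2 : TensorProduct.map A ((LinearMap.mul' R C ∘ₗ TensorProduct.map B D) ∘ₗ
      Coalgebra.comul) = TensorProduct.map A (LinearMap.mul' R C ∘ₗ TensorProduct.map B D) ∘ₗ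
      LinearMap.lTensor U Coalgebra.comul := by
    rw [LinearMap.lTensor, ← TensorProduct.map_comp, LinearMap.comp_id]
  have key : ∀ u : U ⊗[R] (U ⊗[R] U),
      LinearMap.mul' R C
        (TensorProduct.map (LinearMap.mul' R C ∘ₗ TensorProduct.map A B) D
          ((TensorProduct.assoc R U U U).symm u)) =
      LinearMap.mul' R C
        (TensorProduct.map A (LinearMap.mul' R C ∘ₗ TensorProduct.map B D) u) := by
    intro u
    induction u using TensorProduct.induction_on with
    | zero => simp only [LinearEquiv.map_zero, LinearMap.map_zero]
    | tmul a v =>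
      induction v using TensorProduct.induction_on with
      | zero => simp only [tmul_zero, LinearEquiv.map_zero, LinearMap.map_zero]
      | tmul b c => simp [mul_assoc]
      | add v₁ v₂ h₁ h₂ => simp only [tmul_add, map_add, h₁, h₂]
    | add u₁ u₂ h₁ h₂ => simp only [map_add, h₁, h₂]
  rw [← LinearMap.comp_assoc, ← LinearMap.comp_assoc, h1, h2,
    LinearMap.comp_apply, LinearMap.comp_apply,
    ← Coalgebra.coassoc_symm_apply, key]

/-- Generalized Leibniz rule: `x·(fg) = (ξ_{x₍₁₎}·f)·(x₍₂₎·g)` for the modified action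
`x · f := (ξ_{x₍₁₎}·f)·φ(x₍₂₎)`. -/
theorem prop1_generalized_leibniz {R U C : Type*} [CommRing R] [Ring U] [Bialgebra R U]
    [Ring C] [Algebra R C]
    (ξ : U →ₗ[R] Module.End R C)
    (hξone : ξ 1 = LinearMap.id)
    (hξmul : ∀ x y : U, ξ (x * y) = ξ x ∘ₗ ξ y)
    (hξunit : ∀ x : U, ξ x 1 = Coalgebra.counit (R := R) x • (1 : C))
    (hξleib : ∀ (x : U) (f g : C), ξ x (f * g) = sw (actOn ξ f) (actOn ξ g) x)
    (φ : U →ₗ[R] C) (hφone : φ 1 = 1)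
    (hφ : ∀ x y : U, φ (x * y) = sw (actOn ξ (φ y)) φ x) :
    ∀ (x : U) (f g : C),
      sw (actOn ξ (f * g)) φ x =
        sw (actOn ξ f) (sw (actOn ξ g) φ) x := by
  intro x f g
  have h : actOn ξ (f * g) = sw (actOn ξ f) (actOn ξ g) :=
    LinearMap.ext fun y => hξleib y f g
  rw [h, sw_assoc]
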